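/- The bulk equation H2, Q(u00,u10,u01,u11;a,b) = (u00−u11)(u10−u01) + (b−a)(u00+u10+u01+u11) + b² − a², together with the boundary equation q(x,y,z;a) = x + 2y + z + μ and the parameter map σ(a) = −a + μ (where μ is a fixed complex parameter), satisfies the 3D boundary consistency condition. -/

import Mathlib

/-- The bulk quad-graph equation. -/
noncomputable def Qbulk (u00 u10 u01 u11 a b : ℂ) : ℂ :=
  (u00 - u11) * (u10 - u01) + (b - a) * (u00 + u10 + u01 + u11) + b ^ 2 - a ^ 2

/-- The boundary equation. -/
noncomputable def qBdry (mu : ℂ) (x y z a : ℂ) : ℂ :=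
  x + 2 * y + z + mu

/-- The parameter map acting on edge labels. -/
noncomputable def sigmaMap (mu : ℂ) (a : ℂ) : ℂ :=
  -a + mu

/-!
Eliminating the boundary equations, write `k = a + b - mu`, `D₁ = y1 + x + 2 x2 + a + b` and
`D₂ = y1 + x + 2 x1 + a + b`. The two bulk equations with a reflected parameter become
`D₁ (z1 - x2) + k (y1 - x + a - b) = 0` and `D₂ (z2 - x1) + k (y1 - x + b - a) = 0`, while
`D₂ (y1 - x + a - b) - D₁ (y1 - x + b - a)` is `-2` times the first bulk equation. Hence
`z2 - z1 = x1 - x2`, which is exactly `w1 = w2`; substituting this shift into the last bulk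
equation shows that `w2` solves it, so `w3 = w2` because that equation is affine in `w3`.
-/

theorem qBdry_eq_zero_iff {mu x y z a : ℂ} : qBdry mu x y z a = 0 ↔ z = -(x + 2 * y + mu) := by
  unfold qBdry
  constructor <;> intro h <;> linear_combination h

theorem Qbulk_sub_Qbulk_second (u00 u10 u10' u01 u11 a b : ℂ) :
    Qbulk u00 u10 u01 u11 a b - Qbulk u00 u10' u01 u11 a b = (u10 - u10') * (u00 - u11 + b - a) := by
  unfold Qbulk; ring

theorem Qbulk_sub_Qbulk_last (u00 u10 u01 u11 u11' a b : ℂ) :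
    Qbulk u00 u10 u01 u11 a b - Qbulk u00 u10 u01 u11' a b = (u11 - u11') * (u01 - u10 + b - a) := by
  unfold Qbulk; ring

theorem eq_of_Qbulk_last_eq_zero {u00 u10 u01 w w' a b : ℂ}
    (hc : Qbulk u00 u10 u01 1 a b - Qbulk u00 u10 u01 0 a b ≠ 0)
    (hw : Qbulk u00 u10 u01 w a b = 0) (hw' : Qbulk u00 u10 u01 w' a b = 0) : w = w' := by
  rw [Qbulk_sub_Qbulk_last, sub_zero, one_mul] at hc
  have h := Qbulk_sub_Qbulk_last u00 u10 u01 w w' a b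
  rw [hw, hw', sub_zero, eq_comm] at h
  exact sub_eq_zero.mp ((mul_eq_zero.mp h).resolve_right hc)

theorem Qbulk_sigmaMap_of_qBdry (mu x y z u a b : ℂ) :
    Qbulk y z u (-(x + 2 * u + mu)) (sigmaMap mu b) a =
      (y + x + 2 * u + a + b) * (z - u) + (a + b - mu) * (y - x + a - b) := by
  unfold Qbulk sigmaMap; ring

section Scheme

variable {mu a b x x1 x2 y1 z1 z2 : ℂ}

theorem sub_eq_sub_of_Qbulk (e1 : Qbulk y1 x2 x1 x a b = 0)
    (e4 : Qbulk y1 z1 x2 (-(x + 2 * x2 + mu)) (sigmaMap mu b) a = 0)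
    (e5 : Qbulk y1 z2 x1 (-(x + 2 * x1 + mu)) (sigmaMap mu a) b = 0)
    (hD₁ : y1 + x + 2 * x2 + a + b ≠ 0) (hD₂ : y1 + x + 2 * x1 + a + b ≠ 0) :
    z2 - z1 = x1 - x2 := by
  rw [Qbulk_sigmaMap_of_qBdry] at e4 e5
  unfold Qbulk at e1
  refine mul_left_cancel₀ (mul_ne_zero hD₁ hD₂) ?_
  linear_combination (y1 + x + 2 * x2 + a + b) * e5 - (y1 + x + 2 * x1 + a + b) * e4
    - 2 * (a + b - mu) * e1

theorem Qbulk_sigmaMap_shift_eq_zero (e1 : Qbulk y1 x2 x1 x a b = 0)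
    (e4 : Qbulk y1 z1 x2 (-(x + 2 * x2 + mu)) (sigmaMap mu b) a = 0)
    (hz : z2 - z1 = x1 - x2) (hD₁ : y1 + x + 2 * x2 + a + b ≠ 0) :
    Qbulk y1 z1 z2 (x + 2 * x2 - 2 * z1) (sigmaMap mu b) (sigmaMap mu a) = 0 := by
  rw [Qbulk_sigmaMap_of_qBdry] at e4
  unfold Qbulk at e1
  unfold Qbulk sigmaMap
  refine (mul_eq_zero.mp ?_).resolve_left hD₁
  linear_combination (y1 + x + 2 * x2 + a + b - 2 * (a + b - mu)) * e1 - 2 * (x1 - x2) * e4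
    + (y1 + x + 2 * x2 + a + b) * (b - a - y1 + x + 2 * x2 - 2 * z1) * hz

end Scheme

theorem boundary_consistency_stmt_9_general
    (mu : ℂ) (a b : ℂ) 
    (x x1 x2 y1 y2 y3 z1 z2 w1 w2 w3 : ℂ)
    -- the eight equations of the scheme
    (e1 : Qbulk y1 x2 x1 x a b = 0)
    (e2 : qBdry mu x x1 y2 a = 0)
    (e3 : qBdry mu x x2 y3 b = 0)
    (e4 : Qbulk y1 z1 x2 y3 (sigmaMap mu b) a = 0)
    (e5 : Qbulk y1 z2 x1 y2 (sigmaMap mu a) b = 0)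
    (e6 : qBdry mu y2 z2 w1 b = 0)
    (e7 : qBdry mu y3 z1 w2 a = 0)
    (e8 : Qbulk y1 z1 z2 w3 (sigmaMap mu b) (sigmaMap mu a) = 0)
    -- nonvanishing of the coefficient of the determined variable in each
    -- affine-linear equation (coefficient = value at 1 minus value at 0)
    (c4 : Qbulk y1 1 x2 y3 (sigmaMap mu b) a - Qbulk y1 0 x2 y3 (sigmaMap mu b) a ≠ 0)
    (c5 : Qbulk y1 1 x1 y2 (sigmaMap mu a) b - Qbulk y1 0 x1 y2 (sigmaMap mu a) b ≠ 0)
    (c8 : Qbulk y1 z1 z2 1 (sigmaMap mu b) (sigmaMap mu a) - Qbulk y1 z1 z2 0 (sigmaMap mu b) (sigmaMap mu a) ≠ 0) :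
    w1 = w2 ∧ w2 = w3 := by
  obtain rfl := qBdry_eq_zero_iff.mp e2
  obtain rfl := qBdry_eq_zero_iff.mp e3
  obtain rfl := qBdry_eq_zero_iff.mp e6
  obtain rfl := qBdry_eq_zero_iff.mp e7
  have hD₁ : y1 + x + 2 * x2 + a + b ≠ 0 := by
    rw [Qbulk_sub_Qbulk_second, sigmaMap] at c4
    convert c4 using 1; ring
  have hD₂ : y1 + x + 2 * x1 + a + b ≠ 0 := by
    rw [Qbulk_sub_Qbulk_second, sigmaMap] at c5
    convert c5 using 1; ring
  have hz := sub_eq_sub_of_Qbulk e1 e4 e5 hD₁ hD₂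
  refine ⟨by linear_combination -2 * hz, eq_of_Qbulk_last_eq_zero c8 ?_ e8⟩
  convert Qbulk_sigmaMap_shift_eq_zero e1 e4 hz hD₁ using 2
  ring

/-- 3D boundary consistency of the triple (Q, q, σ). -/
theorem boundary_consistency_stmt_9
    (mu : ℂ) (a b : ℂ) 
    (x x1 x2 y1 y2 y3 z1 z2 w1 w2 w3 : ℂ)
    -- the eight equations of the scheme
    (e1 : Qbulk y1 x2 x1 x a b = 0)
    (e2 : qBdry mu x x1 y2 a = 0)
    (e3 : qBdry mu x x2 y3 b = 0)
    (e4 : Qbulk y1 z1 x2 y3 (sigmaMap mu b) a = 0)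
    (e5 : Qbulk y1 z2 x1 y2 (sigmaMap mu a) b = 0)
    (e6 : qBdry mu y2 z2 w1 b = 0)
    (e7 : qBdry mu y3 z1 w2 a = 0)
    (e8 : Qbulk y1 z1 z2 w3 (sigmaMap mu b) (sigmaMap mu a) = 0)
    -- nonvanishing of the coefficient of the determined variable in each
    -- affine-linear equation (coefficient = value at 1 minus value at 0)
    (c1 : Qbulk 1 x2 x1 x a b - Qbulk 0 x2 x1 x a b ≠ 0)
    (c2 : qBdry mu x x1 1 a - qBdry mu x x1 0 a ≠ 0)
    (c3 : qBdry mu x x2 1 b - qBdry mu x x2 0 b ≠ 0)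
    (c4 : Qbulk y1 1 x2 y3 (sigmaMap mu b) a - Qbulk y1 0 x2 y3 (sigmaMap mu b) a ≠ 0)
    (c5 : Qbulk y1 1 x1 y2 (sigmaMap mu a) b - Qbulk y1 0 x1 y2 (sigmaMap mu a) b ≠ 0)
    (c6 : qBdry mu y2 z2 1 b - qBdry mu y2 z2 0 b ≠ 0)
    (c7 : qBdry mu y3 z1 1 a - qBdry mu y3 z1 0 a ≠ 0)
    (c8 : Qbulk y1 z1 z2 1 (sigmaMap mu b) (sigmaMap mu a) - Qbulk y1 z1 z2 0 (sigmaMap mu b) (sigmaMap mu a) ≠ 0) :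
    w1 = w2 ∧ w2 = w3 :=
  boundary_consistency_stmt_9_general mu a b x x1 x2 y1 y2 y3 z1 z2 w1 w2 w3 e1 e2 e3 e4 e5 e6 e7 e8
    c4 c5 c8
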